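/- arXiv:1912.13477 — 14 statements merged into one kernel-verified Lean document; each statement's English description precedes it below -/
import Mathlib

section
/- Let C be a finitary extensive category with finite products, let F and G be endofunctors of C, and let φ be a functor-functor interaction law of F and G. If F has a nullary operation, i.e. there is a family of morphisms c_X : ⊤ ⟶ F X natural in X (where ⊤ is the terminal object), then G is constant zero: for every object Y, the object G Y is initial (G Y ≅ ⊥). -/
open CategoryTheory CategoryTheory.Limits

universe v u

/-- If a functor `F` on a finitary extensive category with finite products has a nullary
operation, then any functor `G` interacting with it via an interaction law `φ` is constant
zero, i.e. `G Y` is initial for every `Y`. -/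
theorem stmt_0 {C : Type u} [Category.{v} C] [FinitaryExtensive C] [HasFiniteProducts C]
    (F G : C ⥤ C)
    (φ : ∀ X Y : C, F.obj X ⨯ G.obj Y ⟶ X ⨯ Y)
    (φ_nat : ∀ {X X' Y Y' : C} (f : X ⟶ X') (g : Y ⟶ Y'),
      prod.map (F.map f) (G.map g) ≫ φ X' Y' = φ X Y ≫ prod.map f g)
    (c : ∀ X : C, ⊤_ C ⟶ F.obj X)
    (c_nat : ∀ {X X' : C} (f : X ⟶ X'), c X ≫ F.map f = c X') :
    ∀ Y : C, Nonempty (IsInitial (G.obj Y)) := by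
  intro Y
  have f : G.obj Y ⟶ ⊥_ C :=
    prod.lift (terminal.from _ ≫ c (⊥_ C)) (𝟙 _) ≫ φ (⊥_ C) Y ≫ prod.fst
  haveI := initial_isIso_to f
  exact ⟨initialIsInitial.ofIso (asIso f).symm⟩
end

section
/- Let C be a finitary extensive category with finite products, let F and G be endofunctors of C, and let φ be a functor-functor interaction law of F and G. If F has a commutative binary operation, i.e. there is a family of morphisms c_X : X ⨯ X ⟶ F X natural in X satisfying c_X = c_X ∘ swap_{X,X} (where swap is the symmetry of the product), then G is constant zero: for every object Y, the object G Y is initial (G Y ≅ ⊥). -/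
open CategoryTheory CategoryTheory.Limits

universe v u

/-!
Put `X := G Y ⨿ G Y`. Applying the commutative operation to the two coproduct injections gives
a generalized element `e : G Y ⟶ F X` that is fixed by `F` of the swap `σ` of `X`; pairing it
with `𝟙 (G Y)` through `φ` and projecting yields `k : G Y ⟶ X`, and `k ≫ σ = k` by naturality
of `φ`.
Pulled back along either injection, such a `k` lands in both summands at once, so by disjointness
of coproducts both pullbacks are initial, and by universality of coproducts so is `G Y`.
-/

variable {C : Type u} [Category.{v} C]

section Extensive

variable [FinitaryExtensive C]

lemma nonempty_isInitial_of_comp_inl_eq_comp_inr {P X Y : C} (f : P ⟶ X) (g : P ⟶ Y)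
    (h : f ≫ coprod.inl = g ≫ coprod.inr) : Nonempty (IsInitial P) :=
  ⟨IsInitial.ofStrict (pullback.lift f g h) IsInitial.ofBinaryCoproductDisjoint⟩

lemma nonempty_isInitial_of_isInitial_pullback_inl_inr {A X Y : C} (k : A ⟶ X ⨿ Y)
    (hl : IsInitial (pullback k coprod.inl)) (hr : IsInitial (pullback k coprod.inr)) :
    Nonempty (IsInitial A) := by
  have vk := FinitaryExtensive.vanKampen _ (coprodIsCoprod X Y)
  rw [BinaryCofan.isVanKampen_iff] at vk
  have pl := IsPullback.of_hasPullback k (coprod.inl : X ⟶ X ⨿ Y)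
  have pr := IsPullback.of_hasPullback k (coprod.inr : Y ⟶ X ⨿ Y)
  obtain ⟨hA⟩ := (vk (BinaryCofan.mk _ _) _ _ k pl.w.symm pr.w.symm).mpr ⟨pl, pr⟩
  exact ⟨IsInitial.ofStrict (hA.desc (BinaryCofan.mk (hl.to (⊥_ C)) (hr.to (⊥_ C))))
    initialIsInitial⟩

lemma nonempty_isInitial_of_comp_braiding_eq {A T : C} (k : A ⟶ T ⨿ T)
    (hk : k ≫ (coprod.braiding T T).hom = k) : Nonempty (IsInitial A) := by
  obtain ⟨hl⟩ := nonempty_isInitial_of_comp_inl_eq_comp_inr (pullback.snd k coprod.inl)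
    (pullback.snd k coprod.inl) <| calc
      pullback.snd k coprod.inl ≫ coprod.inl = pullback.fst k coprod.inl ≫ k :=
        pullback.condition.symm
      _ = pullback.fst k coprod.inl ≫ k ≫ (coprod.braiding T T).hom := by rw [hk]
      _ = pullback.snd k coprod.inl ≫ coprod.inr := by
        simp [pullback.condition_assoc, coprod.inl_desc]
  obtain ⟨hr⟩ := nonempty_isInitial_of_comp_inl_eq_comp_inr (pullback.snd k coprod.inr)
    (pullback.snd k coprod.inr) <| calc
      pullback.snd k coprod.inr ≫ coprod.inl
          = pullback.fst k coprod.inr ≫ k ≫ (coprod.braiding T T).hom := by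
        simp [pullback.condition_assoc, coprod.inr_desc]
      _ = pullback.fst k coprod.inr ≫ k := by rw [hk]
      _ = pullback.snd k coprod.inr ≫ coprod.inr := pullback.condition
  exact nonempty_isInitial_of_isInitial_pullback_inl_inr k hl hr

end Extensive

lemma prod_lift_swap_comp_of_braiding_comp_eq [HasBinaryProducts C] {B X Z : C}
    {c : X ⨯ X ⟶ Z} (hc : (prod.braiding X X).hom ≫ c = c) (x y : B ⟶ X) :
    prod.lift y x ≫ c = prod.lift x y ≫ c := by
  have swap : prod.lift y x = prod.lift x y ≫ (prod.braiding X X).hom := by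
    rw [prod.braiding_hom, prod.comp_lift, prod.lift_fst, prod.lift_snd]
  rw [swap, Category.assoc, hc]

lemma prod_lift_interaction_fst_comp [HasBinaryProducts C] {F G : C ⥤ C}
    (φ : ∀ X Y : C, F.obj X ⨯ G.obj Y ⟶ X ⨯ Y)
    (φ_nat : ∀ {X X' Y Y' : C} (f : X ⟶ X') (g : Y ⟶ Y'),
      prod.map (F.map f) (G.map g) ≫ φ X' Y' = φ X Y ≫ prod.map f g)
    {B X X' Y : C} (a : B ⟶ F.obj X) (b : B ⟶ G.obj Y) (f : X ⟶ X') :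
    prod.lift a b ≫ φ X Y ≫ prod.fst ≫ f = prod.lift (a ≫ F.map f) b ≫ φ X' Y ≫ prod.fst := by
  have hφ := φ_nat f (𝟙 Y)
  rw [G.map_id] at hφ
  calc prod.lift a b ≫ φ X Y ≫ prod.fst ≫ f
      = prod.lift a b ≫ (φ X Y ≫ prod.map f (𝟙 Y)) ≫ prod.fst := by simp
    _ = prod.lift (a ≫ F.map f) b ≫ φ X' Y ≫ prod.fst := by simp [← hφ]

/-- If a functor `F` on a finitary extensive category with finite products has a commutative
binary operation, then any functor `G` interacting with it via an interaction law `φ` is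
constant zero, i.e. `G Y` is initial for every `Y`. -/
theorem stmt_1 {C : Type u} [Category.{v} C] [FinitaryExtensive C] [HasFiniteProducts C]
    (F G : C ⥤ C)
    (φ : ∀ X Y : C, F.obj X ⨯ G.obj Y ⟶ X ⨯ Y)
    (φ_nat : ∀ {X X' Y Y' : C} (f : X ⟶ X') (g : Y ⟶ Y'),
      prod.map (F.map f) (G.map g) ≫ φ X' Y' = φ X Y ≫ prod.map f g)
    (c : ∀ X : C, X ⨯ X ⟶ F.obj X)
    (c_nat : ∀ {X X' : C} (f : X ⟶ X'), prod.map f f ≫ c X' = c X ≫ F.map f)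
    (c_comm : ∀ X : C, (prod.braiding X X).hom ≫ c X = c X) :
    ∀ Y : C, Nonempty (IsInitial (G.obj Y)) := by
  intro Y
  let σ := (coprod.braiding (G.obj Y) (G.obj Y)).hom
  let e := prod.lift coprod.inl coprod.inr ≫ c (G.obj Y ⨿ G.obj Y)
  have he : e ≫ F.map σ = e :=
    calc e ≫ F.map σ = prod.lift (coprod.inl ≫ σ) (coprod.inr ≫ σ) ≫ c _ := by
          rw [Category.assoc, ← c_nat, prod.lift_map_assoc]
      _ = prod.lift coprod.inr coprod.inl ≫ c _ := by simp [σ, coprod.inl_desc, coprod.inr_desc]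
      _ = e := prod_lift_swap_comp_of_braiding_comp_eq (c_comm _) _ _
  refine nonempty_isInitial_of_comp_braiding_eq (prod.lift e (𝟙 _) ≫ φ _ Y ≫ prod.fst) ?_
  rw [Category.assoc, Category.assoc, prod_lift_interaction_fst_comp φ φ_nat, he]
end

section
/- Let C be a finitary extensive category with finite products, let D = (D, ε, δ) be a comonad on C, and let c_Y : D Y ⟶ Y ⨿ Y be a family of morphisms natural in Y (a binary cooperation of D). If c satisfies the coassociativity coequation, i.e. for every Y, ass ∘ (c_Y ⨿ ε_Y) ∘ c_{D Y} ∘ δ_Y = (ε_Y ⨿ c_Y) ∘ c_{D Y} ∘ δ_Y (where ass : (Y ⨿ Y) ⨿ Y ≅ Y ⨿ (Y ⨿ Y) is the coproduct associator), then c also satisfies left and right corectangularity: for every Y, (c_Y ⨿ ε_Y) ∘ c_{D Y} ∘ δ_Y = (inl ⨿ id_Y) ∘ c_Y as morphisms D Y ⟶ (Y ⨿ Y) ⨿ Y, and (ε_Y ⨿ c_Y) ∘ c_{D Y} ∘ δ_Y = (id_Y ⨿ inr) ∘ c_Y as morphisms D Y ⟶ Y ⨿ (Y ⨿ Y). -/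
open CategoryTheory CategoryTheory.Limits

universe v u

/-!
Write `f = δ_Y ≫ c_{DY} : DY ⟶ DY ⨿ DY`. By extensivity `DY` is the coproduct of the pullbacks
of `f` along the two coprojections, so two maps out of `DY` agree as soon as they agree on both
pieces. On the piece where `f` lands in the left summand both sides of right corectangularity
are `ε` followed by the first coprojection; on the other piece, the coassociativity equation
itself identifies them. Left corectangularity then follows by composing with the associator, and
`f ≫ (ε ⨿ ε) = c_Y` by naturality of `c` and the counit law.
-/

namespace CategoryTheory.Limits

lemma coprod.map_inl_id_associator_hom {C : Type u} [Category.{v} C] [HasBinaryCoproducts C]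
    (X Y Z : C) :
    coprod.map coprod.inl (𝟙 Z) ≫ (coprod.associator X Y Z).hom =
      coprod.map (𝟙 X) coprod.inr := by
  ext <;> simp only [coprod.associator_hom, coprod.inl_map_assoc, coprod.inr_map_assoc,
    coprod.inl_desc, coprod.inr_desc, coprod.inl_map, coprod.inr_map, Category.id_comp]

end CategoryTheory.Limits

namespace CategoryTheory.FinitaryPreExtensive

variable {C : Type u} [Category.{v} C] [FinitaryPreExtensive C]

lemma isColimit_pullback_coprod {X A B : C} (f : X ⟶ A ⨿ B) :
    Nonempty (IsColimit (BinaryCofan.mk (pullback.fst f coprod.inl)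
      (pullback.fst f coprod.inr))) :=
  FinitaryPreExtensive.universal' _ (coprodIsCoprod A B) _
    (mapPair (pullback.snd f coprod.inl) (pullback.snd f coprod.inr)) f
    (by ext ⟨⟨⟩⟩
        · exact (pullback.condition (f := f) (g := coprod.inl)).symm
        · exact (pullback.condition (f := f) (g := coprod.inr)).symm) (.of_discrete _)
    (by rintro ⟨⟨⟩⟩
        · exact IsPullback.of_hasPullback f coprod.inl
        · exact IsPullback.of_hasPullback f coprod.inr)

lemma hom_ext_of_coprod {X A B T : C} (f : X ⟶ A ⨿ B) {g g' : X ⟶ T}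
    (hl : pullback.fst f coprod.inl ≫ g = pullback.fst f coprod.inl ≫ g')
    (hr : pullback.fst f coprod.inr ≫ g = pullback.fst f coprod.inr ≫ g') : g = g' :=
  BinaryCofan.IsColimit.hom_ext (isColimit_pullback_coprod f).some hl hr

lemma comp_eq_comp_desc_of_comp_eq {X A B T : C} {f : X ⟶ A ⨿ B} {u₁ u₂ : A ⨿ B ⟶ T}
    (h : f ≫ u₁ = f ≫ u₂) :
    f ≫ u₁ = f ≫ coprod.desc (coprod.inl ≫ u₁) (coprod.inr ≫ u₂) := by
  refine hom_ext_of_coprod f ?_ ?_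
  · simp only [reassoc_of% pullback.condition (f := f) (g := coprod.inl), coprod.inl_desc]
  · rw [h]
    simp only [reassoc_of% pullback.condition (f := f) (g := coprod.inr), coprod.inr_desc]

variable {X A B Y₁ Y₂ Y₃ : C} {f : X ⟶ A ⨿ B} {g : A ⟶ Y₁ ⨿ Y₂} {e : B ⟶ Y₃} {e' : A ⟶ Y₁}
  {g' : B ⟶ Y₂ ⨿ Y₃}

lemma comp_map_eq_map_inr_of_coassoc
    (h : f ≫ coprod.map g e ≫ (coprod.associator Y₁ Y₂ Y₃).hom =
      f ≫ coprod.map e' g') :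
    f ≫ coprod.map e' g' = (f ≫ coprod.map e' e) ≫ coprod.map (𝟙 Y₁) coprod.inr := by
  rw [comp_eq_comp_desc_of_comp_eq h.symm, Category.assoc]
  congr 1
  ext <;> simp only [coprod.inl_desc, coprod.inr_desc, coprod.inl_map, coprod.inr_map,
    coprod.inl_map_assoc, coprod.inr_map_assoc, coprod.associator_hom, Category.id_comp]

lemma comp_map_eq_map_inl_of_coassoc
    (h : f ≫ coprod.map g e ≫ (coprod.associator Y₁ Y₂ Y₃).hom =
      f ≫ coprod.map e' g') :
    f ≫ coprod.map g e = (f ≫ coprod.map e' e) ≫ coprod.map coprod.inl (𝟙 Y₃) := by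
  rw [← cancel_mono (coprod.associator Y₁ Y₂ Y₃).hom]
  simp only [Category.assoc, h, comp_map_eq_map_inr_of_coassoc h,
    coprod.map_inl_id_associator_hom]

end CategoryTheory.FinitaryPreExtensive

lemma CategoryTheory.Comonad.δ_comp_cooperation_comp_map_ε {C : Type u} [Category.{v} C]
    [HasBinaryCoproducts C] (D : Comonad C) (c : ∀ Y : C, D.obj Y ⟶ Y ⨿ Y)
    (c_nat : ∀ {Y Y' : C} (f : Y ⟶ Y'), D.map f ≫ c Y' = c Y ≫ coprod.map f f)
    (Y : C) : (D.δ.app Y ≫ c (D.obj Y)) ≫ coprod.map (D.ε.app Y) (D.ε.app Y) = c Y := by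
  rw [Category.assoc, ← c_nat, ← Category.assoc, D.right_counit, Category.id_comp]
  rfl

theorem stmt_3_general {C : Type u} [Category.{v} C] [FinitaryExtensive C]
    (D : Comonad C)
    (c : ∀ Y : C, D.obj Y ⟶ Y ⨿ Y)
    (c_nat : ∀ {Y Y' : C} (f : Y ⟶ Y'), D.map f ≫ c Y' = c Y ≫ coprod.map f f)
    (c_coassoc : ∀ Y : C,
      D.δ.app Y ≫ c (D.obj Y) ≫ coprod.map (c Y) (D.ε.app Y) ≫ (coprod.associator Y Y Y).hom =
        D.δ.app Y ≫ c (D.obj Y) ≫ coprod.map (D.ε.app Y) (c Y)) :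
    ∀ Y : C,
      (D.δ.app Y ≫ c (D.obj Y) ≫ coprod.map (c Y) (D.ε.app Y) =
        c Y ≫ coprod.map coprod.inl (𝟙 Y)) ∧
      (D.δ.app Y ≫ c (D.obj Y) ≫ coprod.map (D.ε.app Y) (c Y) =
        c Y ≫ coprod.map (𝟙 Y) coprod.inr) := by
  intro Y
  have coassoc : (D.δ.app Y ≫ c (D.obj Y)) ≫ coprod.map (c Y) (D.ε.app Y) ≫
      (coprod.associator Y Y Y).hom =
        (D.δ.app Y ≫ c (D.obj Y)) ≫ coprod.map (D.ε.app Y) (c Y) := by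
    simpa only [Category.assoc] using c_coassoc Y
  have counit := D.δ_comp_cooperation_comp_map_ε c c_nat Y
  have left := FinitaryPreExtensive.comp_map_eq_map_inl_of_coassoc coassoc
  have right := FinitaryPreExtensive.comp_map_eq_map_inr_of_coassoc coassoc
  rw [counit, Category.assoc] at left right
  exact ⟨left, right⟩

/-- For a comonad `D` on a finitary extensive category with finite products with a binary
cooperation `c`, coassociativity of `c` implies left and right corectangularity. -/
theorem stmt_3 {C : Type u} [Category.{v} C] [FinitaryExtensive C] [HasFiniteProducts C]
    (D : Comonad C)
    (c : ∀ Y : C, D.obj Y ⟶ Y ⨿ Y)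
    (c_nat : ∀ {Y Y' : C} (f : Y ⟶ Y'), D.map f ≫ c Y' = c Y ≫ coprod.map f f)
    (c_coassoc : ∀ Y : C,
      D.δ.app Y ≫ c (D.obj Y) ≫ coprod.map (c Y) (D.ε.app Y) ≫ (coprod.associator Y Y Y).hom =
        D.δ.app Y ≫ c (D.obj Y) ≫ coprod.map (D.ε.app Y) (c Y)) :
    ∀ Y : C,
      (D.δ.app Y ≫ c (D.obj Y) ≫ coprod.map (c Y) (D.ε.app Y) =
        c Y ≫ coprod.map coprod.inl (𝟙 Y)) ∧
      (D.δ.app Y ≫ c (D.obj Y) ≫ coprod.map (D.ε.app Y) (c Y) =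
        c Y ≫ coprod.map (𝟙 Y) coprod.inr) :=
  stmt_3_general D c c_nat c_coassoc
end

section
/- For every type X, the type of natural transformations from the identity functor of the category of types to the functor Y ↦ X × Y is equivalent (in bijection) to X; that is, the dual of the identity functor is isomorphic to the identity functor. -/
universe u

/-- The dual of the identity functor on types is isomorphic to the identity functor:
for every type `X`, natural transformations from the identity functor to `Y ↦ X × Y`
are in bijection with `X`. -/
theorem stmt_4 (X : Type u) :
    Nonempty
      ({ α : ∀ Y : Type u, Y → X × Y //
          ∀ (Y Y' : Type u) (f : Y → Y') (y : Y), α Y' (f y) = Prod.map id f (α Y y) } ≃ X) := by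
  constructor
  refine
    { toFun := fun α => (α.1 PUnit PUnit.unit).1
      invFun := fun x => ⟨fun Y y => (x, y), fun Y Y' f y => rfl⟩
      left_inv := ?_
      right_inv := fun x => rfl }
  rintro ⟨α, h⟩
  ext Y y
  · exact congrArg Prod.fst (h PUnit Y (fun _ => y) PUnit.unit).symm
  · exact congrArg Prod.snd (h PUnit Y (fun _ => y) PUnit.unit).symm
end

section
/- Let G' be an endofunctor of the category of types, let A be a type, and let G be the endofunctor G Y = A × G' Y. Then for every type X, the type of natural transformations from G to the functor Y ↦ X × Y is equivalent to the type of functions A → (type of natural transformations from G' to Y ↦ X × Y); that is, G° X ≅ A → G'° X. -/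
universe u

/-- For an endofunctor `G'` of types and a type `A`, the dual of the functor
`G Y = A × G' Y` at `X` is equivalent to `A → G'° X`. -/
theorem stmt_6 (A : Type u) (G' : Type u → Type u)
    (mapG' : ∀ {Y Y' : Type u}, (Y → Y') → G' Y → G' Y')
    (mapG'_id : ∀ {Y : Type u} (t : G' Y), mapG' id t = t)
    (mapG'_comp : ∀ {Y₁ Y₂ Y₃ : Type u} (f : Y₁ → Y₂) (g : Y₂ → Y₃) (t : G' Y₁),
      mapG' (g ∘ f) t = mapG' g (mapG' f t))
    (X : Type u) :
    Nonempty
      ({ α : ∀ Y : Type u, A × G' Y → X × Y //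
          ∀ (Y Y' : Type u) (f : Y → Y') (p : A × G' Y),
            α Y' (p.1, mapG' f p.2) = Prod.map id f (α Y p) } ≃
        (A → { β : ∀ Y : Type u, G' Y → X × Y //
          ∀ (Y Y' : Type u) (f : Y → Y') (t : G' Y),
            β Y' (mapG' f t) = Prod.map id f (β Y t) })) := by
  refine ⟨⟨fun α a => ⟨fun Y t => α.1 Y (a, t), fun Y Y' f t => α.2 Y Y' f (a, t)⟩,
    fun β => ⟨fun Y p => (β p.1).1 Y p.2, fun Y Y' f p => (β p.1).2 Y Y' f p.2⟩,
    ?_, ?_⟩⟩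
  · intro α
    exact Subtype.ext (funext fun Y => funext fun p => rfl)
  · intro β
    funext a
    exact Subtype.ext rfl
end

section
/- Let A be a type and let G be the endofunctor of the category of types given by G Y = (A → Y). Then for every type X, the type of natural transformations from G to the functor Y ↦ X × Y is equivalent to A × X; that is, the dual of the exponent of the identity functor G Y = A → Y is G° X ≅ A × X. -/
universe u

/-- The dual of the functor `G Y = A → Y` at `X` is equivalent to `A × X`. -/
theorem stmt_7 (A : Type u) (X : Type u) :
    Nonempty
      ({ α : ∀ Y : Type u, (A → Y) → X × Y //
          ∀ (Y Y' : Type u) (f : Y → Y') (h : A → Y),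
            α Y' (f ∘ h) = Prod.map id f (α Y h) } ≃ (A × X)) := by
  constructor
  refine
    { toFun := fun α => ((α.1 A id).2, (α.1 A id).1)
      invFun := fun p => ⟨fun Y h => (p.2, h p.1), fun Y Y' f h => rfl⟩
      left_inv := ?_
      right_inv := fun p => rfl }
  rintro ⟨α, hα⟩
  ext Y h
  · exact congrArg Prod.fst (hα A Y h id).symm
  · exact congrArg Prod.snd (hα A Y h id).symm
end

section
/- Let A be a type and let G' a be an endofunctor of the category of types for each a : A, and let G be the endofunctor G Y = Σ a : A, G' a Y. Then for every type X, the type of natural transformations from G to the functor Y ↦ X × Y is equivalent to the dependent product Π a : A, (type of natural transformations from G' a to Y ↦ X × Y); that is, G° X ≅ Π a : A, (G' a)° X. -/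
universe u

/-- For a family of endofunctors `G' a` of types indexed by `a : A`, the dual of the functor
`G Y = Σ a : A, G' a Y` at `X` is equivalent to `Π a : A, (G' a)° X`. -/
theorem stmt_8 (A : Type u) (G' : A → Type u → Type u)
    (mapG' : ∀ (a : A) {Y Y' : Type u}, (Y → Y') → G' a Y → G' a Y')
    (mapG'_id : ∀ (a : A) {Y : Type u} (t : G' a Y), mapG' a id t = t)
    (mapG'_comp : ∀ (a : A) {Y₁ Y₂ Y₃ : Type u} (f : Y₁ → Y₂) (g : Y₂ → Y₃) (t : G' a Y₁),
      mapG' a (g ∘ f) t = mapG' a g (mapG' a f t))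
    (X : Type u) :
    Nonempty
      ({ α : ∀ Y : Type u, (Σ a : A, G' a Y) → X × Y //
          ∀ (Y Y' : Type u) (f : Y → Y') (p : Σ a : A, G' a Y),
            α Y' ⟨p.1, mapG' p.1 f p.2⟩ = Prod.map id f (α Y p) } ≃
        (∀ a : A, { β : ∀ Y : Type u, G' a Y → X × Y //
          ∀ (Y Y' : Type u) (f : Y → Y') (t : G' a Y),
            β Y' (mapG' a f t) = Prod.map id f (β Y t) })) := by
  refine ⟨{
    toFun := fun α a => ⟨fun Y t => α.1 Y ⟨a, t⟩, fun Y Y' f t => α.2 Y Y' f ⟨a, t⟩⟩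
    invFun := fun β => ⟨fun Y p => (β p.1).1 Y p.2, fun Y Y' f p => (β p.1).2 Y Y' f p.2⟩
    left_inv := fun α => Subtype.ext (by funext Y p; cases p; rfl)
    right_inv := fun β => by funext a; rfl }⟩
end

section
/- Let F and G be endofunctors of the category of types. There is a bijection between functor-functor interaction laws of F and G (families of functions φ_{X,Y} : F X × G Y → X × Y natural in both X and Y) and families of functions φ'_X : F X → G° X natural in X, where G° X is the type of natural transformations from G to the functor Y ↦ X × Y (with functorial action on f : X → X' given by postcomposing each component with f × id). The bijection sends φ to φ'_X t = (the natural transformation whose component at Y sends d to φ_{X,Y}(t, d)). -/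
universe u

/-- Functor-functor interaction laws of endofunctors `F` and `G` of types are in bijection
with families of maps `φ'_X : F X → G° X` natural in `X`, where `G° X` is the type of
natural transformations from `G` to `Y ↦ X × Y`; the bijection sends `φ` to the family
`fun t => fun Y d => φ X Y (t, d)`. -/
theorem stmt_9 (F G : Type u → Type u)
    (mapF : ∀ {X X' : Type u}, (X → X') → F X → F X')
    (mapG : ∀ {Y Y' : Type u}, (Y → Y') → G Y → G Y')
    (mapF_id : ∀ {X : Type u} (t : F X), mapF id t = t)
    (mapF_comp : ∀ {X₁ X₂ X₃ : Type u} (f : X₁ → X₂) (g : X₂ → X₃) (t : F X₁),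
      mapF (g ∘ f) t = mapF g (mapF f t))
    (mapG_id : ∀ {Y : Type u} (d : G Y), mapG id d = d)
    (mapG_comp : ∀ {Y₁ Y₂ Y₃ : Type u} (f : Y₁ → Y₂) (g : Y₂ → Y₃) (d : G Y₁),
      mapG (g ∘ f) d = mapG g (mapG f d)) :
    ∃ e :
      ({ φ : ∀ X Y : Type u, F X × G Y → X × Y //
          (∀ (X X' Y : Type u) (f : X → X') (t : F X) (d : G Y),
            φ X' Y (mapF f t, d) = Prod.map f id (φ X Y (t, d))) ∧
          (∀ (X Y Y' : Type u) (g : Y → Y') (t : F X) (d : G Y),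
            φ X Y' (t, mapG g d) = Prod.map id g (φ X Y (t, d))) }) ≃
      ({ φ' : ∀ X : Type u, F X →
            { α : ∀ Y : Type u, G Y → X × Y //
              ∀ (Y Y' : Type u) (g : Y → Y') (d : G Y),
                α Y' (mapG g d) = Prod.map id g (α Y d) } //
          ∀ (X X' : Type u) (f : X → X') (t : F X) (Y : Type u) (d : G Y),
            (φ' X' (mapF f t)).val Y d = Prod.map f id ((φ' X t).val Y d) }),
      ∀ φ X t Y d, ((e φ).val X t).val Y d = φ.val X Y (t, d) := by
  refine ⟨{
    toFun := fun φ => ⟨fun X t => ⟨fun Y d => φ.val X Y (t, d),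
      fun Y Y' g d => φ.2.2 X Y Y' g t d⟩,
      fun X X' f t Y d => φ.2.1 X X' Y f t d⟩,
    invFun := fun ψ => ⟨fun X Y p => (ψ.val X p.1).val Y p.2,
      ⟨fun X X' Y f t d => ψ.2 X X' f t Y d,
       fun X Y Y' g t d => (ψ.val X t).2 Y Y' g d⟩⟩,
    left_inv := fun φ => rfl,
    right_inv := fun ψ => rfl }, fun φ X t Y d => rfl⟩
end

section
/- Let T = (T, η, μ) be a monad and D = (D, ε, δ) a comonad on the category of types, let ψ be a monad-comonad interaction law of T and D, and let γ : Y → D Y be a coalgebra of the comonad D (i.e. ε_Y ∘ γ = id_Y and D γ ∘ γ = δ_Y ∘ γ). Then the family θ_X (t, y) = ψ_{X,Y} (t, γ y) is a stateful runner of T with state set Y: it is natural in X and satisfies θ_X (η_X x, y) = (x, y) and θ_X (μ_X t, y) = θ_X (θ_{T X} (t, y)). -/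
universe u

/-- A monad on the category of types. -/
structure TMonad : Type (u + 1) where
  obj : Type u → Type u
  map : ∀ {X Y : Type u}, (X → Y) → obj X → obj Y
  unit : ∀ {X : Type u}, X → obj X
  mult : ∀ {X : Type u}, obj (obj X) → obj X
  map_id : ∀ {X : Type u} (t : obj X), map id t = t
  map_comp : ∀ {X Y Z : Type u} (f : X → Y) (g : Y → Z) (t : obj X),
    map (g ∘ f) t = map g (map f t)
  unit_nat : ∀ {X Y : Type u} (f : X → Y) (x : X), map f (unit x) = unit (f x)
  mult_nat : ∀ {X Y : Type u} (f : X → Y) (t : obj (obj X)),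
    map f (mult t) = mult (map (map f) t)
  mult_unit : ∀ {X : Type u} (t : obj X), mult (unit t) = t
  mult_map_unit : ∀ {X : Type u} (t : obj X), mult (map unit t) = t
  mult_assoc : ∀ {X : Type u} (t : obj (obj (obj X))), mult (mult t) = mult (map mult t)

/-- A comonad on the category of types. -/
structure TComonad : Type (u + 1) where
  obj : Type u → Type u
  map : ∀ {X Y : Type u}, (X → Y) → obj X → obj Y
  counit : ∀ {X : Type u}, obj X → X
  comult : ∀ {X : Type u}, obj X → obj (obj X)
  map_id : ∀ {X : Type u} (d : obj X), map id d = d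
  map_comp : ∀ {X Y Z : Type u} (f : X → Y) (g : Y → Z) (d : obj X),
    map (g ∘ f) d = map g (map f d)
  counit_nat : ∀ {X Y : Type u} (f : X → Y) (d : obj X), counit (map f d) = f (counit d)
  comult_nat : ∀ {X Y : Type u} (f : X → Y) (d : obj X),
    comult (map f d) = map (map f) (comult d)
  counit_comult : ∀ {X : Type u} (d : obj X), counit (comult d) = d
  map_counit_comult : ∀ {X : Type u} (d : obj X), map counit (comult d) = d
  comult_assoc : ∀ {X : Type u} (d : obj X), comult (comult d) = map comult (comult d)

/-- Given a monad-comonad interaction law `ψ` of `T` and `D` on types and a comonad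
coalgebra `γ : Y → D Y`, the family `θ_X (t, y) = ψ_{X,Y} (t, γ y)` is a stateful runner
of `T` with state set `Y`. -/
theorem stmt_11 (T : TMonad.{u}) (D : TComonad.{u})
    (ψ : ∀ X Y : Type u, T.obj X × D.obj Y → X × Y)
    (ψ_natX : ∀ (X X' Y : Type u) (f : X → X') (t : T.obj X) (d : D.obj Y),
      ψ X' Y (T.map f t, d) = Prod.map f id (ψ X Y (t, d)))
    (ψ_natY : ∀ (X Y Y' : Type u) (g : Y → Y') (t : T.obj X) (d : D.obj Y),
      ψ X Y' (t, D.map g d) = Prod.map id g (ψ X Y (t, d)))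
    (ψ_unit : ∀ (X Y : Type u) (x : X) (d : D.obj Y),
      ψ X Y (T.unit x, d) = (x, D.counit d))
    (ψ_mult : ∀ (X Y : Type u) (t : T.obj (T.obj X)) (d : D.obj Y),
      ψ X Y (T.mult t, d) = ψ X Y (ψ (T.obj X) (D.obj Y) (t, D.comult d)))
    (Y : Type u) (γ : Y → D.obj Y)
    (γ_counit : ∀ y : Y, D.counit (γ y) = y)
    (γ_comult : ∀ y : Y, D.map γ (γ y) = D.comult (γ y)) :
    (∀ (X X' : Type u) (f : X → X') (t : T.obj X) (y : Y),
      ψ X' Y (T.map f t, γ y) = Prod.map f id (ψ X Y (t, γ y))) ∧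
    (∀ (X : Type u) (x : X) (y : Y), ψ X Y (T.unit x, γ y) = (x, y)) ∧
    (∀ (X : Type u) (t : T.obj (T.obj X)) (y : Y),
      ψ X Y (T.mult t, γ y) =
        ψ X Y ((ψ (T.obj X) Y (t, γ y)).1, γ (ψ (T.obj X) Y (t, γ y)).2)) := by
  refine ⟨fun X X' f t y => ψ_natX X X' Y f t (γ y), fun X x y => by
    rw [ψ_unit, γ_counit], fun X t y => ?_⟩
  rw [ψ_mult, ← γ_comult, ψ_natY]
  rfl
end

section
/- Let T = (T, η, μ) be a monad on the category of types and Z a type. There is a bijection between Eilenberg–Moore algebra structures on Z, i.e. functions α : T Z → Z with α ∘ η_Z = id and α ∘ μ_Z = α ∘ T α, and families of functions ξ_X : T X → ((X → Z) → Z) natural in X satisfying the monad morphism laws into the continuation monad Cont^Z: ξ_X (η_X x) = fun k => k x, and ξ_X (μ_X t) = fun k => ξ_{T X} t (fun t' => ξ_X t' k). -/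
universe u

/-- Eilenberg–Moore algebra structures on `Z` for a monad `T` on types are in bijection
with families of maps `ξ_X : T X → (X → Z) → Z` natural in `X` forming a monad morphism
from `T` to the continuation monad `Cont^Z`. -/
theorem stmt_12 (T : TMonad.{u}) (Z : Type u) :
    Nonempty
      ({ α : T.obj Z → Z //
          (∀ z : Z, α (T.unit z) = z) ∧
          (∀ t : T.obj (T.obj Z), α (T.mult t) = α (T.map α t)) } ≃
        { ξ : ∀ X : Type u, T.obj X → (X → Z) → Z //
          (∀ (X X' : Type u) (f : X → X') (t : T.obj X),
            ξ X' (T.map f t) = fun k => ξ X t (k ∘ f)) ∧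
          (∀ (X : Type u) (x : X), ξ X (T.unit x) = fun k => k x) ∧
          (∀ (X : Type u) (t : T.obj (T.obj X)),
            ξ X (T.mult t) = fun k => ξ (T.obj X) t (fun t' => ξ X t' k)) }) := by
  constructor
  refine
    { toFun := fun ⟨α, hu, hm⟩ =>
        ⟨fun X t k => α (T.map k t), ?_, ?_, ?_⟩
      invFun := fun ⟨ξ, hnat, hu, hm⟩ =>
        ⟨fun t => ξ Z t id, ?_, ?_⟩
      left_inv := ?_
      right_inv := ?_ }
  · intro X X' f t
    funext k
    simp only [← T.map_comp]
  · intro X x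
    funext k
    beta_reduce
    rw [T.unit_nat, hu]
  · intro X t
    funext k
    beta_reduce
    rw [T.mult_nat, hm, ← T.map_comp]
    rfl
  · intro z
    beta_reduce
    rw [hu]
    rfl
  · intro t
    beta_reduce
    rw [hm, hnat]
    rfl
  · rintro ⟨α, hu, hm⟩
    ext t
    simp [T.map_id]
  · rintro ⟨ξ, hnat, hu, hm⟩
    ext X t k
    show ξ Z (T.map k t) id = ξ X t k
    rw [hnat]
    rfl
end

section
/- Fix a monoid (B, ⊕, o) and a right action ↓ : A × B → A of B on a type A (a ↓ o = a and a ↓ (b ⊕ b') = (a ↓ b) ↓ b'). Let T X = A → B × X with unit η x = fun a => (o, x) and multiplication μ f = fun a => let (b, g) := f a; let (b', x) := g (a ↓ b); (b ⊕ b', x) (the update monad), and let D Y = A × (B → Y) with counit ε (a, g) = g o and comultiplication δ (a, g) = (a, fun b => (a ↓ b, fun b' => g (b ⊕ b'))) (the associated comonad). Then the family ψ_{X,Y} (f, (a, g)) = (let (b, x) := f a; (x, g b)) is a monad-comonad interaction law of T and D: it is natural in X and Y and satisfies ψ_{X,Y} (η x, d) = (x, ε d) and ψ_{X,Y} (μ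 t, d) = (let (t', d') := ψ_{T X, D Y} (t, δ d); ψ_{X,Y} (t', d')). -/
universe u

variable {A B : Type u}

/-- Functorial action of the update monad `T X = A → B × X`. -/
def updTMap {X X' : Type u} (h : X → X') (f : A → B × X) : A → B × X' :=
  fun a => ((f a).1, h (f a).2)

/-- Unit of the update monad. -/
def updUnit [Monoid B] {X : Type u} (x : X) : A → B × X := fun _ => (1, x)

/-- Multiplication of the update monad for an action `act` of `B` on `A`. -/
def updMult [Monoid B] (act : A → B → A) {X : Type u}
    (f : A → B × (A → B × X)) : A → B × X :=
  fun a => ((f a).1 * ((f a).2 (act a (f a).1)).1, ((f a).2 (act a (f a).1)).2)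

/-- Functorial action of the associated comonad `D Y = A × (B → Y)`. -/
def updDMap {Y Y' : Type u} (k : Y → Y') (d : A × (B → Y)) : A × (B → Y') :=
  (d.1, k ∘ d.2)

/-- Counit of the comonad `D Y = A × (B → Y)`. -/
def updCounit [Monoid B] {Y : Type u} (d : A × (B → Y)) : Y := d.2 1

/-- Comultiplication of the comonad `D Y = A × (B → Y)` for an action `act`. -/
def updComult [Monoid B] (act : A → B → A) {Y : Type u}
    (d : A × (B → Y)) : A × (B → A × (B → Y)) :=
  (d.1, fun b => (act d.1 b, fun b' => d.2 (b * b')))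

/-- The interaction of the update monad with its associated comonad. -/
def updPsi (X Y : Type u) (f : A → B × X) (d : A × (B → Y)) : X × Y :=
  ((f d.1).2, d.2 (f d.1).1)

/-- For a monoid `B` acting on `A`, the family
`ψ_{X,Y} (f, (a, g)) = (let (b, x) := f a; (x, g b))` is a monad-comonad interaction law of
the update monad `T X = A → B × X` and the comonad `D Y = A × (B → Y)`. -/
theorem stmt_13 [Monoid B] (act : A → B → A)
    (act_one : ∀ a : A, act a 1 = a)
    (act_mul : ∀ (a : A) (b b' : B), act a (b * b') = act (act a b) b') :
    (∀ (X X' Y : Type u) (h : X → X') (f : A → B × X) (d : A × (B → Y)),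
      updPsi X' Y (updTMap h f) d = Prod.map h id (updPsi X Y f d)) ∧
    (∀ (X Y Y' : Type u) (k : Y → Y') (f : A → B × X) (d : A × (B → Y)),
      updPsi X Y' f (updDMap k d) = Prod.map id k (updPsi X Y f d)) ∧
    (∀ (X Y : Type u) (x : X) (d : A × (B → Y)),
      updPsi X Y (updUnit x) d = (x, updCounit d)) ∧
    (∀ (X Y : Type u) (f : A → B × (A → B × X)) (d : A × (B → Y)),
      updPsi X Y (updMult act f) d =
        updPsi X Y (updPsi (A → B × X) (A × (B → Y)) f (updComult act d)).1
          (updPsi (A → B × X) (A × (B → Y)) f (updComult act d)).2) := by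
  refine ⟨fun _ _ _ _ _ _ => rfl, fun _ _ _ _ _ _ => rfl, fun _ _ _ _ => rfl, fun X Y f d => ?_⟩
  simp [updPsi, updMult, updComult]
end

section
/- Fix a monoid (B, ⊕, o) and a right action ↓ : A × B → A of B on a type A (a ↓ o = a and a ↓ (b ⊕ b') = (a ↓ b) ↓ b'), and let T X = A → B × X be the update monad with unit η x = fun a => (o, x) and multiplication μ f = fun a => let (b, g) := f a; let (b', x) := g (a ↓ b); (b ⊕ b', x). Let (Y, lkp : Y → A, upd : Y × B → Y) be an update lens: upd (y, o) = y, upd (y, b ⊕ b') = upd (upd (y, b), b'), and lkp (upd (y, b)) = lkp y ↓ b. Then the family θ_X (f, y) = (let (b, x) := f (lkp y); (x, upd (y, b))) is a stateful runner of T with state set Y: it is natural in X and satisfies θ_X (η x, y) = (x, y) and θ_X (μ t, y) = θ_X (θ_{T X} (t, y)). -/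
universe u

variable {A B : Type u}

/-- The runner of the update monad induced by an update lens `(Y, lkp, upd)`. -/
def updTheta {Y : Type u} (lkp : Y → A) (upd : Y × B → Y) (X : Type u)
    (p : (A → B × X) × Y) : X × Y :=
  ((p.1 (lkp p.2)).2, upd (p.2, (p.1 (lkp p.2)).1))

/-- For a monoid `B` acting on `A` and an update lens `(Y, lkp, upd)`, the family
`θ_X (f, y) = (let (b, x) := f (lkp y); (x, upd (y, b)))` is a stateful runner of the
update monad `T X = A → B × X` with state set `Y`. -/
theorem stmt_14 [Monoid B] (act : A → B → A)
    (act_one : ∀ a : A, act a 1 = a)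
    (act_mul : ∀ (a : A) (b b' : B), act a (b * b') = act (act a b) b')
    (Y : Type u) (lkp : Y → A) (upd : Y × B → Y)
    (upd_one : ∀ y : Y, upd (y, 1) = y)
    (upd_mul : ∀ (y : Y) (b b' : B), upd (y, b * b') = upd (upd (y, b), b'))
    (lkp_upd : ∀ (y : Y) (b : B), lkp (upd (y, b)) = act (lkp y) b) :
    (∀ (X X' : Type u) (h : X → X') (f : A → B × X) (y : Y),
      updTheta lkp upd X' (updTMap h f, y) = Prod.map h id (updTheta lkp upd X (f, y))) ∧
    (∀ (X : Type u) (x : X) (y : Y), updTheta lkp upd X (updUnit x, y) = (x, y)) ∧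
    (∀ (X : Type u) (f : A → B × (A → B × X)) (y : Y),
      updTheta lkp upd X (updMult act f, y) =
        updTheta lkp upd X (updTheta lkp upd (A → B × X) (f, y))) := by
  refine ⟨fun X X' h f y => rfl, fun X x y => by simp [updTheta, updUnit, upd_one], fun X f y => ?_⟩
  simp [updTheta, updMult, updTMap, upd_mul, lkp_upd]
end

section
/- Let R = (R, η^R, μ^R) and T = (T, η, μ) be monads on the category of types and let Y be a type. There is a bijection between R-residual runners of T with state set Y (families of functions θ_X : T X × Y → R (X × Y) natural in X with θ_X (η_X x, y) = η^R (x, y) and θ_X (μ_X t, y) = μ^R ((R θ_X) (θ_{T X} (t, y)))) and families of functions ϑ_X : T X → (Y → R (X × Y)) natural in X satisfying the monad morphism laws into the R-transformed state monad St^{R,Y}: ϑ_X (η_X x) = fun y => η^R (x, y), and ϑ_X (μ_X t) = fun y => μ^R ((R-map of (fun (g, y') => g y')) applied to (R-map of ϑ_X) (ϑ_{T X} t y)). The bijection is given by currying: ϑ_X t = fun y => θ_X (t, y). -/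
universe u

/-- `R`-residual runners of a monad `T` on types with state set `Y` are in bijection with
families of maps `ϑ_X : T X → (Y → R (X × Y))` natural in `X` forming a monad morphism from
`T` to the `R`-transformed state monad `St^{R,Y}`; the bijection is given by currying. -/
theorem stmt_16 (R T : TMonad.{u}) (Y : Type u) :
    ∃ e :
      ({ θ : ∀ X : Type u, T.obj X × Y → R.obj (X × Y) //
          (∀ (X X' : Type u) (f : X → X') (t : T.obj X) (y : Y),
            θ X' (T.map f t, y) = R.map (Prod.map f id) (θ X (t, y))) ∧
          (∀ (X : Type u) (x : X) (y : Y), θ X (T.unit x, y) = R.unit (x, y)) ∧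
          (∀ (X : Type u) (t : T.obj (T.obj X)) (y : Y),
            θ X (T.mult t, y) = R.mult (R.map (θ X) (θ (T.obj X) (t, y)))) }) ≃
      ({ ϑ : ∀ X : Type u, T.obj X → Y → R.obj (X × Y) //
          (∀ (X X' : Type u) (f : X → X') (t : T.obj X),
            ϑ X' (T.map f t) = fun y => R.map (Prod.map f id) (ϑ X t y)) ∧
          (∀ (X : Type u) (x : X), ϑ X (T.unit x) = fun y => R.unit (x, y)) ∧
          (∀ (X : Type u) (t : T.obj (T.obj X)),
            ϑ X (T.mult t) = fun y =>
              R.mult (R.map (fun p : (Y → R.obj (X × Y)) × Y => p.1 p.2)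
                (R.map (fun p : T.obj X × Y => (ϑ X p.1, p.2)) (ϑ (T.obj X) t y)))) }),
      ∀ θ X t y, (e θ).val X t y = θ.val X (t, y) := by
  refine ⟨⟨
    fun θ => ⟨fun X t y => θ.val X (t, y), ?_, ?_, ?_⟩,
    fun ϑ => ⟨fun X p => ϑ.val X p.1 p.2, ?_, ?_, ?_⟩,
    fun θ => rfl, fun ϑ => rfl⟩, fun θ X t y => rfl⟩
  · intro X X' f t
    funext y
    exact θ.2.1 X X' f t y
  · intro X x
    funext y
    exact θ.2.2.1 X x y
  · intro X t
    funext y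
    dsimp only
    rw [θ.2.2.2 X t y, ← R.map_comp]
    rfl
  · intro X X' f t y
    exact congrFun (ϑ.2.1 X X' f t) y
  · intro X x y
    exact congrFun (ϑ.2.2.1 X x) y
  · intro X t y
    dsimp only
    rw [congrFun (ϑ.2.2.2 X t) y, ← R.map_comp]
    rfl
end

section
/- Let T = (T, η, μ) be a monad and D = (D, ε, δ) a comonad on the category of types, and define D° X to be the type of natural transformations from D to the functor Y ↦ X × Y. There is a bijection between monad-comonad interaction laws of T and D and families of functions ψ'_X : T X → D° X natural in X satisfying the monad morphism laws into the monad D°: (unit law) for all x and all Y and d : D Y, (ψ'_X (η_X x)) at Y applied to d equals (x, ε_Y d); (multiplication law) for all t : T (T X) and all Y and d : D Y, (ψ'_X (μ_X t)) at Y applied to d equals (let (t', d') := (ψ'_{T X} t) at (D Y) applied to (δ_Y d); (ψ'_X t') at Y applied to d'). The bijection sends ψ to ψ'_X t = (the natural transformation whose component at Y sends d to ψ_{X,Y}(t, d)). -/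
universe u

/-- Monad-comonad interaction laws of `T` and `D` on types are in bijection with families
of maps `ψ'_X : T X → D° X` natural in `X` forming a monad morphism from `T` to the monad
`D°`, where `D° X` is the type of natural transformations from `D` to `Y ↦ X × Y`;
the bijection sends `ψ` to `fun t => fun Y d => ψ X Y (t, d)`. -/
theorem stmt_18 (T : TMonad.{u}) (D : TComonad.{u}) :
    ∃ e :
      ({ ψ : ∀ X Y : Type u, T.obj X × D.obj Y → X × Y //
          (∀ (X X' Y : Type u) (f : X → X') (t : T.obj X) (d : D.obj Y),
            ψ X' Y (T.map f t, d) = Prod.map f id (ψ X Y (t, d))) ∧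
          (∀ (X Y Y' : Type u) (g : Y → Y') (t : T.obj X) (d : D.obj Y),
            ψ X Y' (t, D.map g d) = Prod.map id g (ψ X Y (t, d))) ∧
          (∀ (X Y : Type u) (x : X) (d : D.obj Y),
            ψ X Y (T.unit x, d) = (x, D.counit d)) ∧
          (∀ (X Y : Type u) (t : T.obj (T.obj X)) (d : D.obj Y),
            ψ X Y (T.mult t, d) = ψ X Y (ψ (T.obj X) (D.obj Y) (t, D.comult d))) }) ≃
      ({ ψ' : ∀ X : Type u, T.obj X →
            { α : ∀ Y : Type u, D.obj Y → X × Y //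
              ∀ (Y Y' : Type u) (g : Y → Y') (d : D.obj Y),
                α Y' (D.map g d) = Prod.map id g (α Y d) } //
          (∀ (X X' : Type u) (f : X → X') (t : T.obj X) (Y : Type u) (d : D.obj Y),
            (ψ' X' (T.map f t)).val Y d = Prod.map f id ((ψ' X t).val Y d)) ∧
          (∀ (X : Type u) (x : X) (Y : Type u) (d : D.obj Y),
            (ψ' X (T.unit x)).val Y d = (x, D.counit d)) ∧
          (∀ (X : Type u) (t : T.obj (T.obj X)) (Y : Type u) (d : D.obj Y),
            (ψ' X (T.mult t)).val Y d =
              (ψ' X ((ψ' (T.obj X) t).val (D.obj Y) (D.comult d)).1).val Y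
                ((ψ' (T.obj X) t).val (D.obj Y) (D.comult d)).2) }),
      ∀ ψ X t Y d, ((e ψ).val X t).val Y d = ψ.val X Y (t, d) := by
  refine ⟨{
    toFun := fun ψ => ⟨fun X t => ⟨fun Y d => ψ.val X Y (t, d),
      fun Y Y' g d => ψ.property.2.1 X Y Y' g t d⟩,
      fun X X' f t Y d => ψ.property.1 X X' Y f t d,
      fun X x Y d => ψ.property.2.2.1 X Y x d,
      fun X t Y d => ψ.property.2.2.2 X Y t d⟩
    invFun := fun ψ' => ⟨fun X Y p => (ψ'.val X p.1).val Y p.2,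
      fun X X' Y f t d => ψ'.property.1 X X' f t Y d,
      fun X Y Y' g t d => (ψ'.val X t).property Y Y' g d,
      fun X Y x d => ψ'.property.2.1 X x Y d,
      fun X Y t d => ψ'.property.2.2 X t Y d⟩
    left_inv := fun ψ => by
      apply Subtype.ext
      funext X Y p
      rfl
    right_inv := fun ψ' => by
      apply Subtype.ext
      funext X t
      rfl }, fun ψ X t Y d => rfl⟩
end
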